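/- Let C be an [n,k]_q linear code with 1 ≤ s ≤ k-2. If C is an (s+1)-minimal code, then C is an s-minimal code. -/
import Mathlib


open Module

variable {F : Type*} [Field F] [Fintype F]

/-- The support of a subspace `U ⊆ F^ι`: coordinates where some vector of `U` is nonzero. -/
def csupp {ι : Type*} (U : Submodule F (ι → F)) : Set ι :=
  {j | ∃ x ∈ U, x j ≠ 0}

/-- The support weight of a subspace of `F^ι`. -/
noncomputable def wt {ι : Type*} (U : Submodule F (ι → F)) : ℕ := (csupp U).ncard

/-- `U` is an `s`-minimal subcode of `C`. -/
def IsMinimalSubcode {ι : Type*} (C U : Submodule F (ι → F)) (s : ℕ) : Prop :=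
  U ≤ C ∧ Module.finrank F U = s ∧
    ∀ V : Submodule F (ι → F), V ≤ C → Module.finrank F V = s →
      csupp V ⊆ csupp U → V = U

/-- `C` is an `s`-minimal code. -/
def SMinimal {ι : Type*} (C : Submodule F (ι → F)) (s : ℕ) : Prop :=
  ∀ U : Submodule F (ι → F), U ≤ C → Module.finrank F U = s → IsMinimalSubcode C U s

/-- The `s`-th generalized Hamming weight of `C`. -/
noncomputable def dGHW {ι : Type*} (C : Submodule F (ι → F)) (s : ℕ) : ℕ :=
  sInf {w | ∃ U : Submodule F (ι → F), U ≤ C ∧ Module.finrank F U = s ∧ wt U = w}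

/-- The `s`-th maximum support weight of `C`. -/
noncomputable def DGHW {ι : Type*} (C : Submodule F (ι → F)) (s : ℕ) : ℕ :=
  sSup {w | ∃ U : Submodule F (ι → F), U ≤ C ∧ Module.finrank F U = s ∧ wt U = w}

lemma csupp_mono {ι : Type*} {A B : Submodule F (ι → F)} (h : A ≤ B) :
    csupp A ⊆ csupp B := by
  rintro j ⟨x, hx, hxj⟩
  exact ⟨x, h hx, hxj⟩

lemma csupp_sup {ι : Type*} (A B : Submodule F (ι → F)) :
    csupp (A ⊔ B) = csupp A ∪ csupp B := by
  apply Set.Subset.antisymm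
  · rintro j ⟨x, hx, hxj⟩
    obtain ⟨a, ha, b, hb, rfl⟩ := Submodule.mem_sup.1 hx
    by_cases haj : a j = 0
    · right
      refine ⟨b, hb, ?_⟩
      intro hbj
      exact hxj (by simp [haj, hbj])
    · exact Or.inl ⟨a, ha, haj⟩
  · rintro j (⟨x, hx, hxj⟩ | ⟨x, hx, hxj⟩)
    · exact ⟨x, Submodule.mem_sup_left hx, hxj⟩
    · exact ⟨x, Submodule.mem_sup_right hx, hxj⟩

lemma finrank_sup_span_singleton {ι : Type*} [Finite ι] (U : Submodule F (ι → F))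
    (w : ι → F) (hw : w ∉ U) :
    Module.finrank F ↥(U ⊔ (F ∙ w)) = Module.finrank F U + 1 := by
  have hw0 : w ≠ 0 := fun h => hw (h ▸ U.zero_mem)
  have hinf : U ⊓ (F ∙ w) = ⊥ := by
    rw [Submodule.eq_bot_iff]
    rintro x ⟨hxU, hxw⟩
    obtain ⟨c, rfl⟩ := Submodule.mem_span_singleton.1 hxw
    rcases eq_or_ne c 0 with rfl | hc
    · simp
    · exact absurd (by simpa [hc] using U.smul_mem c⁻¹ hxU) hw
  have key := Submodule.finrank_sup_add_finrank_inf_eq U (F ∙ w)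
  rw [hinf, finrank_span_singleton hw0] at key
  simpa using key

/-- an `(s+1)`-minimal code is an `s`-minimal code. -/
theorem sMinimal_of_succ_sMinimal (n k s : ℕ) (hs1 : 1 ≤ s) (hs2 : s ≤ k - 2)
    (C : Submodule F (Fin n → F)) (hC : Module.finrank F C = k)
    (h : SMinimal C (s + 1)) :
    SMinimal C s := by
  have hk : s + 2 ≤ k := by omega
  intro U hUC hU
  refine ⟨hUC, hU, ?_⟩
  intro V hVC hV hsupp
  -- It suffices to show V ≤ U.
  suffices hVU : V ≤ U by
    exact Submodule.eq_of_le_of_finrank_eq hVU (by rw [hU, hV])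
  intro v hv
  by_contra hvU
  -- A := U ⊔ span v has rank s+1 < k, V has rank s < k.
  set A : Submodule F (Fin n → F) := U ⊔ (F ∙ v) with hA
  have hAC : A ≤ C := sup_le hUC ((Submodule.span_singleton_le_iff_mem v C).2 (hVC hv))
  have hArank : Module.finrank F A = s + 1 := by
    rw [hA, finrank_sup_span_singleton U v hvU, hU]
  have hAne : A ≠ C := fun hEq => by
    rw [hEq, hC] at hArank; omega
  have hVne : V ≠ C := fun hEq => by
    rw [hEq, hC] at hV; omega
  -- find w ∈ C with w ∉ A and w ∉ V
  obtain ⟨a, haC, haA⟩ := SetLike.exists_of_lt (lt_of_le_of_ne hAC hAne)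
  obtain ⟨b, hbC, hbV⟩ := SetLike.exists_of_lt (lt_of_le_of_ne hVC hVne)
  obtain ⟨w, hwC, hwA, hwV⟩ : ∃ w, w ∈ C ∧ w ∉ A ∧ w ∉ V := by
    by_cases haV : a ∈ V
    · by_cases hbA : b ∈ A
      · refine ⟨a + b, C.add_mem haC hbC, ?_, ?_⟩
        · intro hab
          exact haA (by simpa using A.sub_mem hab hbA)
        · intro hab
          exact hbV (by simpa using V.sub_mem hab haV)
      · exact ⟨b, hbC, hbA, hbV⟩
    · exact ⟨a, haC, haA, haV⟩
  have hwU : w ∉ U := fun hw => hwA (Submodule.mem_sup_left hw)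
  -- Apply (s+1)-minimality to U ⊔ span w and V ⊔ span w.
  have hU'C : U ⊔ (F ∙ w) ≤ C :=
    sup_le hUC ((Submodule.span_singleton_le_iff_mem w C).2 hwC)
  have hV'C : V ⊔ (F ∙ w) ≤ C :=
    sup_le hVC ((Submodule.span_singleton_le_iff_mem w C).2 hwC)
  have hU'r : Module.finrank F ↥(U ⊔ (F ∙ w)) = s + 1 := by
    rw [finrank_sup_span_singleton U w hwU, hU]
  have hV'r : Module.finrank F ↥(V ⊔ (F ∙ w)) = s + 1 := by
    rw [finrank_sup_span_singleton V w hwV, hV]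
  have hsupp' : csupp (V ⊔ (F ∙ w)) ⊆ csupp (U ⊔ (F ∙ w)) := by
    rw [csupp_sup, csupp_sup]
    exact Set.union_subset_union_left _ hsupp
  have heq : V ⊔ (F ∙ w) = U ⊔ (F ∙ w) :=
    (h (U ⊔ (F ∙ w)) hU'C hU'r).2.2 _ hV'C hV'r hsupp'
  -- v ∈ U ⊔ span w, so v = u + c • w; c must be 0.
  have hv' : v ∈ U ⊔ (F ∙ w) := heq ▸ Submodule.mem_sup_left hv
  obtain ⟨u, huU, x, hxw, hvsum⟩ := Submodule.mem_sup.1 hv'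
  obtain ⟨c, rfl⟩ := Submodule.mem_span_singleton.1 hxw
  rcases eq_or_ne c 0 with rfl | hc
  · exact hvU (by simpa [← hvsum] using huU)
  · apply hwA
    have hvA : v ∈ A := Submodule.mem_sup_right (Submodule.mem_span_singleton_self v)
    have huA : u ∈ A := Submodule.mem_sup_left huU
    have : c • w ∈ A := by
      have := A.sub_mem hvA huA
      rwa [← hvsum, add_sub_cancel_left] at this
    simpa [hc] using A.smul_mem c⁻¹ this
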